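/- arXiv:2603.13475 — 4 statements merged into one kernel-verified Lean document; each statement's English description precedes it below -/
import Mathlib

section
/- The function h(t) = (t² − 1 − 2t·ln t) / (2(t−1)²), extended by continuity at t = 1 with h(1) = 0, is monotonically increasing on (0, ∞). -/
/-!
The numerator `N t = t² - 1 - 2t log t` of `h` and the numerator `p t = (t + 1) log t - 2(t - 1)`
of `h' = p / (t - 1)³` both vanish at `1` and increase on `(0, ∞)`: their derivatives
`2(t - 1 - log t)` and `log t - (1 - t⁻¹)` are nonnegative by `1 - t⁻¹ ≤ log t ≤ t - 1`.
Hence `h ≤ 0` on `(0, 1]`, `h ≥ 0` on `[1, ∞)`, and `h' ≥ 0` on `(0, 1)` and on `(1, ∞)`.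
-/

open Classical in
/-- `h(t) = (t² − 1 − 2t·ln t)/(2(t−1)²)` for `t ≠ 1`, extended continuously by `h(1) = 0`. -/
noncomputable def h5 (t : ℝ) : ℝ :=
  if t = 1 then 0 else (t ^ 2 - 1 - 2 * t * Real.log t) / (2 * (t - 1) ^ 2)

open Real Set

theorem Convex.monotoneOn_of_hasDerivAt_nonneg {D : Set ℝ} (hD : Convex ℝ D) {f f' : ℝ → ℝ}
    (hf : ∀ x ∈ D, HasDerivAt f (f' x) x) (hf'₀ : ∀ x ∈ D, 0 ≤ f' x) : MonotoneOn f D :=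
  monotoneOn_of_hasDerivWithinAt_nonneg hD
    (fun x hx => (hf x hx).continuousAt.continuousWithinAt)
    (fun x hx => (hf x (interior_subset hx)).hasDerivWithinAt)
    (fun x hx => hf'₀ x (interior_subset hx))

theorem hasDerivAt_sq_sub_one_sub_two_mul_mul_log {t : ℝ} (ht : t ≠ 0) :
    HasDerivAt (fun t => t ^ 2 - 1 - 2 * t * log t) (2 * (t - 1 - log t)) t := by
  have h := (((hasDerivAt_pow 2 t).sub_const 1).sub
    (((hasDerivAt_id' t).const_mul 2).mul (hasDerivAt_log ht)))
  refine h.congr_deriv ?_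
  field_simp
  ring

theorem monotoneOn_sq_sub_one_sub_two_mul_mul_log :
    MonotoneOn (fun t => t ^ 2 - 1 - 2 * t * log t) (Ioi 0) :=
  (convex_Ioi 0).monotoneOn_of_hasDerivAt_nonneg
    (fun _ ht => hasDerivAt_sq_sub_one_sub_two_mul_mul_log (ne_of_gt ht))
    (fun _ ht => by linarith [log_le_sub_one_of_pos ht])

theorem hasDerivAt_add_one_mul_log_sub {t : ℝ} (ht : t ≠ 0) :
    HasDerivAt (fun t => (t + 1) * log t - 2 * (t - 1)) (log t - (1 - t⁻¹)) t := by
  have h := (((hasDerivAt_id' t).add_const 1).mul (hasDerivAt_log ht)).sub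
    (((hasDerivAt_id' t).sub_const 1).const_mul 2)
  refine h.congr_deriv ?_
  field_simp
  ring

theorem monotoneOn_add_one_mul_log_sub :
    MonotoneOn (fun t => (t + 1) * log t - 2 * (t - 1)) (Ioi 0) :=
  (convex_Ioi 0).monotoneOn_of_hasDerivAt_nonneg
    (fun _ ht => hasDerivAt_add_one_mul_log_sub (ne_of_gt ht))
    (fun _ ht => sub_nonneg.2 (one_sub_inv_le_log_of_pos ht))

theorem h5_nonpos {t : ℝ} (ht₀ : 0 < t) (ht₁ : t ≤ 1) : h5 t ≤ 0 := by
  have hN : t ^ 2 - 1 - 2 * t * log t ≤ 0 := by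
    simpa using monotoneOn_sq_sub_one_sub_two_mul_mul_log ht₀ (mem_Ioi.2 one_pos) ht₁
  unfold h5
  split_ifs
  · rfl
  · exact div_nonpos_of_nonpos_of_nonneg hN (by positivity)

theorem h5_nonneg {t : ℝ} (ht : 1 ≤ t) : 0 ≤ h5 t := by
  have hN : 0 ≤ t ^ 2 - 1 - 2 * t * log t := by
    simpa using monotoneOn_sq_sub_one_sub_two_mul_mul_log (mem_Ioi.2 one_pos)
      (mem_Ioi.2 (one_pos.trans_le ht)) ht
  unfold h5
  split_ifs
  · rfl
  · exact div_nonneg hN (by positivity)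

theorem hasDerivAt_h5 {t : ℝ} (ht₀ : t ≠ 0) (ht₁ : t ≠ 1) :
    HasDerivAt h5 (((t + 1) * log t - 2 * (t - 1)) / (t - 1) ^ 3) t := by
  have hsub : t - 1 ≠ 0 := sub_ne_zero.2 ht₁
  have hD : HasDerivAt (fun t : ℝ => 2 * (t - 1) ^ 2) (2 * (2 * (t - 1))) t := by
    simpa using (((hasDerivAt_id' t).sub_const 1).pow 2).const_mul 2
  have hquot := (hasDerivAt_sq_sub_one_sub_two_mul_mul_log ht₀).div hD (by positivity)
  have hh5 : (fun t => (t ^ 2 - 1 - 2 * t * log t) / (2 * (t - 1) ^ 2)) =ᶠ[nhds t] h5 := by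
    filter_upwards [eventually_ne_nhds ht₁] with x hx
    simp [h5, hx]
  refine (hquot.congr_of_eventuallyEq hh5.symm).congr_deriv ?_
  field_simp
  ring

theorem add_one_mul_log_sub_div_pow_three_nonneg {t : ℝ} (ht : 0 < t) :
    0 ≤ ((t + 1) * log t - 2 * (t - 1)) / (t - 1) ^ 3 := by
  rcases le_total t 1 with ht₁ | ht₁
  · have hp : (t + 1) * log t - 2 * (t - 1) ≤ 0 := by
      simpa using monotoneOn_add_one_mul_log_sub ht (mem_Ioi.2 one_pos) ht₁
    exact div_nonneg_of_nonpos hp ((Odd.pow_nonpos_iff (by decide)).2 (by linarith))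
  · have hp : 0 ≤ (t + 1) * log t - 2 * (t - 1) := by
      simpa using monotoneOn_add_one_mul_log_sub (mem_Ioi.2 one_pos)
        (mem_Ioi.2 (one_pos.trans_le ht₁)) ht₁
    exact div_nonneg hp (pow_nonneg (by linarith) 3)

theorem monotoneOn_h5_of_convex {D : Set ℝ} (hD : Convex ℝ D) (hD₀ : D ⊆ Ioi 0) (hD₁ : 1 ∉ D) :
    MonotoneOn h5 D :=
  hD.monotoneOn_of_hasDerivAt_nonneg
    (fun _ ht => hasDerivAt_h5 (ne_of_gt (hD₀ ht)) (ne_of_mem_of_not_mem ht hD₁))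
    (fun _ ht => add_one_mul_log_sub_div_pow_three_nonneg (hD₀ ht))

/-- The function `h`, extended by continuity at `t = 1` with `h(1) = 0`, is monotonically
increasing on `(0, ∞)`. -/
theorem stmt_5 : MonotoneOn h5 (Set.Ioi (0 : ℝ)) := by
  intro x hx y hy hxy
  rcases lt_or_ge y 1 with hy₁ | hy₁
  · exact monotoneOn_h5_of_convex (convex_Ioo 0 1) Ioo_subset_Ioi_self (fun h => lt_irrefl _ h.2)
      ⟨hx, hxy.trans_lt hy₁⟩ ⟨hy, hy₁⟩ hxy
  rcases le_or_gt x 1 with hx₁ | hx₁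
  · exact (h5_nonpos hx hx₁).trans (h5_nonneg hy₁)
  · exact monotoneOn_h5_of_convex (convex_Ioi 1) (Ioi_subset_Ioi zero_le_one) (lt_irrefl (1 : ℝ))
      hx₁ (hx₁.trans_le hxy) hxy
end

section
/- For any α > 0 and r* > 0, the improper integral ∫_{r*}^∞ r* / (r·√(1+αr²)·√(r²−r*²)) dr converges and equals arctan(1/(r*·√α)). -/
/-!
The integrand has the explicit antiderivative
`F r = arctan (√(r² - r*²) / (r* √(1 + α r²)))`, which vanishes at `r = r*` and tends to
`arctan (1 / (r* √α))` as `r → ∞`. Since the integrand is nonnegative, the fundamental theorem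
of calculus on `(r*, ∞)` gives both integrability and the value of the integral.
-/

open MeasureTheory Filter Topology

namespace GeodesicOpeningAngle

variable {α rs : ℝ}

noncomputable def antideriv (α rs r : ℝ) : ℝ :=
  Real.arctan (Real.sqrt (r ^ 2 - rs ^ 2) / (rs * Real.sqrt (1 + α * r ^ 2)))

lemma antideriv_self (α rs : ℝ) : antideriv α rs rs = 0 := by
  simp [antideriv]

lemma continuous_antideriv (hα : 0 ≤ α) (hrs : rs ≠ 0) : Continuous (antideriv α rs) := by
  refine Real.continuous_arctan.comp (Continuous.div (by fun_prop) (by fun_prop) fun r => ?_)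
  have : 0 < Real.sqrt (1 + α * r ^ 2) := Real.sqrt_pos.2 (by positivity)
  positivity

lemma hasDerivAt_antideriv (hα : 0 ≤ α) (hrs : 0 < rs) {r : ℝ} (hr : rs < r) :
    HasDerivAt (antideriv α rs)
      (rs / (r * Real.sqrt (1 + α * r ^ 2) * Real.sqrt (r ^ 2 - rs ^ 2))) r := by
  have hr0 : 0 < r := hrs.trans hr
  have hu2 : 0 < r ^ 2 - rs ^ 2 := by nlinarith
  have hv2 : 0 < 1 + α * r ^ 2 := by positivity
  set u := Real.sqrt (r ^ 2 - rs ^ 2) with hu_def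
  set v := Real.sqrt (1 + α * r ^ 2) with hv_def
  have hu : 0 < u := Real.sqrt_pos.2 hu2
  have hv : 0 < v := Real.sqrt_pos.2 hv2
  have husq : u ^ 2 = r ^ 2 - rs ^ 2 := Real.sq_sqrt hu2.le
  have hvsq : v ^ 2 = 1 + α * r ^ 2 := Real.sq_sqrt hv2.le
  have hU : HasDerivAt (fun x : ℝ => Real.sqrt (x ^ 2 - rs ^ 2)) (2 * r / (2 * u)) r := by
    refine HasDerivAt.sqrt ?_ hu2.ne'
    simpa using (hasDerivAt_pow 2 r).sub_const (rs ^ 2)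
  have hV : HasDerivAt (fun x : ℝ => rs * Real.sqrt (1 + α * x ^ 2))
      (rs * (α * (2 * r) / (2 * v))) r := by
    have h : HasDerivAt (fun x : ℝ => 1 + α * x ^ 2) (α * (2 * r)) r := by
      simpa using ((hasDerivAt_pow 2 r).const_mul α).const_add 1
    exact (h.sqrt hv2.ne').const_mul rs
  convert (hU.div hV (by positivity)).arctan using 1
  · rfl
  have : 1 + (u / (rs * v)) ^ 2 ≠ 0 := by positivity
  simp only [Pi.div_apply, ← hu_def, ← hv_def]
  field_simp
  linear_combination (1 + α * r ^ 2) * husq + (rs ^ 2 - r ^ 2) * hvsq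

lemma tendsto_sub_sq_div_one_add_mul_sq (hα : 0 < α) (rs : ℝ) :
    Tendsto (fun r : ℝ => (r ^ 2 - rs ^ 2) / (1 + α * r ^ 2)) atTop (𝓝 (1 / α)) := by
  have hinv : Tendsto (fun r : ℝ => (r ^ 2)⁻¹) atTop (𝓝 0) :=
    (tendsto_pow_atTop two_ne_zero).inv_tendsto_atTop
  have hlim : Tendsto (fun r : ℝ => (1 - rs ^ 2 * (r ^ 2)⁻¹) / ((r ^ 2)⁻¹ + α)) atTop
      (𝓝 ((1 - rs ^ 2 * 0) / (0 + α))) :=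
    (tendsto_const_nhds.sub (tendsto_const_nhds.mul hinv)).div
      (hinv.add tendsto_const_nhds) (by simp [hα.ne'])
  rw [mul_zero, sub_zero, zero_add] at hlim
  refine hlim.congr' ?_
  filter_upwards [eventually_gt_atTop 0] with r hr
  have : 1 + α * r ^ 2 ≠ 0 := by positivity
  field_simp

lemma tendsto_antideriv_atTop (hα : 0 < α) (rs : ℝ) :
    Tendsto (antideriv α rs) atTop (𝓝 (Real.arctan (1 / (rs * Real.sqrt α)))) := by
  have hlim := ((Real.continuous_arctan.tendsto _).comp
    (((Real.continuous_sqrt.tendsto _).comp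
      (tendsto_sub_sq_div_one_add_mul_sq hα rs)).div_const rs))
  rw [Function.comp_def, one_div, Real.sqrt_inv, div_eq_mul_inv, ← mul_inv, mul_comm,
    ← one_div] at hlim
  refine hlim.congr' ?_
  filter_upwards [eventually_ge_atTop |rs|] with r hr
  have : rs ^ 2 ≤ r ^ 2 := sq_le_sq' (neg_le_of_abs_le hr) ((le_abs_self rs).trans hr)
  simp only [Function.comp_apply, antideriv]
  rw [Real.sqrt_div (sub_nonneg.2 this), div_div, mul_comm rs]

lemma integrand_nonneg (hrs : 0 < rs) {r : ℝ} (hr : rs < r) :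
    0 ≤ rs / (r * Real.sqrt (1 + α * r ^ 2) * Real.sqrt (r ^ 2 - rs ^ 2)) := by
  have : 0 < r := hrs.trans hr
  positivity

end GeodesicOpeningAngle

open GeodesicOpeningAngle in
/-- For `α > 0` and `r* > 0`, the improper integral
`∫_{r*}^∞ r*/(r·√(1+αr²)·√(r²−r*²)) dr` converges and equals `arctan(1/(r*·√α))`. -/
theorem stmt_11 (α rs : ℝ) (hα : 0 < α) (hrs : 0 < rs) :
    IntegrableOn
        (fun r : ℝ => rs / (r * Real.sqrt (1 + α * r ^ 2) * Real.sqrt (r ^ 2 - rs ^ 2)))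
        (Set.Ioi rs) volume ∧
      ∫ r in Set.Ioi rs,
          rs / (r * Real.sqrt (1 + α * r ^ 2) * Real.sqrt (r ^ 2 - rs ^ 2)) =
        Real.arctan (1 / (rs * Real.sqrt α)) := by
  have hcont : ContinuousWithinAt (antideriv α rs) (Set.Ici rs) rs :=
    (continuous_antideriv hα.le hrs.ne').continuousWithinAt
  have hderiv := fun r (hr : r ∈ Set.Ioi rs) => hasDerivAt_antideriv hα.le hrs hr
  have hnonneg := fun r (hr : r ∈ Set.Ioi rs) => integrand_nonneg (α := α) hrs hr
  have hlim := tendsto_antideriv_atTop hα rs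
  refine ⟨integrableOn_Ioi_deriv_of_nonneg hcont hderiv hnonneg hlim, ?_⟩
  rw [integral_Ioi_of_hasDerivAt_of_nonneg hcont hderiv hnonneg hlim, antideriv_self, sub_zero]
end

section
/- Let A be a positive definite n×n complex matrix and B any n×n complex matrix. Then Tr(A · ∫₀^∞ (A+sI)⁻¹ B (A+sI)⁻¹ B (A+sI)⁻¹ ds) = (1/2)·Tr(∫₀^∞ (A+sI)⁻¹ B (A+sI)⁻¹ B ds). -/
/-!
Write `R s = (A + s)⁻¹` and `g s = tr (R s B R s B)`. Since `R' = -R²` and `A R = 1 - s R`,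
cyclicity of the trace gives `tr (A R B R B R) = g + (s / 2) g' = (g + (s g)') / 2`.
Integrating over `(0, ∞)`, the boundary term `s g(s)` vanishes at `0` and, as `g = O(s⁻²)`,
at `∞`, leaving `(1 / 2) ∫ g`. The decay comes from `‖R s‖ = O((1 + s)⁻¹)`, which holds by
compactness because `(1 + s) R s = (t A + (1 - t))⁻¹` with `t = (1 + s)⁻¹ ∈ (0, 1]`.
-/

open MeasureTheory Matrix
open scoped ComplexOrder

attribute [local instance] Matrix.frobeniusNormedAddCommGroup Matrix.frobeniusNormedSpace

open Set Filter Topology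

theorem integrableOn_Ioi_of_norm_le_inv_one_add_sq {E : Type*} [NormedAddCommGroup E]
    {F : ℝ → E} {C : ℝ} (hF : ContinuousOn F (Ioi 0))
    (hbound : ∀ s > 0, ‖F s‖ ≤ C * (1 + s)⁻¹ ^ 2) : IntegrableOn F (Ioi 0) := by
  have hC : 0 ≤ C :=
    nonneg_of_mul_nonneg_left ((norm_nonneg _).trans (hbound 1 one_pos)) (by positivity)
  refine (integrable_inv_one_add_sq.integrableOn.const_mul C).mono'
    (hF.aestronglyMeasurable measurableSet_Ioi) ?_
  filter_upwards [ae_restrict_mem measurableSet_Ioi] with s (hs : 0 < s)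
  refine (hbound s hs).trans (mul_le_mul_of_nonneg_left ?_ hC)
  rw [inv_pow]
  exact inv_anti₀ (by positivity) (by nlinarith)

namespace Matrix

variable {n : Type*}

theorem PosDef.smul_add_one_sub_smul_one [DecidableEq n] {A : Matrix n n ℂ} (hA : A.PosDef)
    {t : ℝ} (ht₀ : 0 ≤ t) (ht₁ : t ≤ 1) : (t • A + (1 - t) • 1).PosDef := by
  rcases ht₁.lt_or_eq with ht₁ | rfl
  · exact PosDef.posSemidef_add (hA.posSemidef.smul ht₀) (PosDef.one.smul (sub_pos.2 ht₁))
  · simpa using hA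

variable [Fintype n]

/- With the Frobenius norm as a local instance, a bare `Integrable` on matrices elaborates against
the product topology and finds no `ContinuousENorm`, so the instance is passed explicitly. -/
theorem trace_mul_integral {α : Type*} [MeasurableSpace α] {μ : Measure α}
    (M : Matrix n n ℂ) {F : α → Matrix n n ℂ}
    (hF : @Integrable (Matrix n n ℂ) _ SeminormedAddGroup.toContinuousENorm α _ F μ) :
    (M * ∫ x, F x ∂μ).trace = ∫ x, (M * F x).trace ∂μ :=
  ((LinearMap.toContinuousLinearMap
    ((traceLinearMap n ℂ ℂ).comp (LinearMap.mulLeft ℂ M))).integral_comp_comm hF).symm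

theorem integrable_trace_mul {α : Type*} [MeasurableSpace α] {μ : Measure α}
    (M : Matrix n n ℂ) {F : α → Matrix n n ℂ}
    (hF : @Integrable (Matrix n n ℂ) _ SeminormedAddGroup.toContinuousENorm α _ F μ) :
    Integrable (fun x => (M * F x).trace) μ :=
  (LinearMap.toContinuousLinearMap
    ((traceLinearMap n ℂ ℂ).comp (LinearMap.mulLeft ℂ M))).integrable_comp hF

section

attribute [local instance] Matrix.frobeniusNormedRing Matrix.frobeniusNormedAlgebra

local notation "𝐑" A:max s:max => (A + ((s : ℝ) : ℂ) • (1 : Matrix _ _ ℂ))⁻¹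

variable [DecidableEq n] {A : Matrix n n ℂ}

namespace PosDef

theorem isUnit_add_smul_one (hA : A.PosDef) {s : ℝ} (hs : 0 ≤ s) : IsUnit (A + (s : ℂ) • 1) :=
  (hA.add_posSemidef (PosSemidef.one.smul (by exact_mod_cast hs))).isUnit

theorem hasDerivAt_inv_add_smul_one (hA : A.PosDef) {s : ℝ} (hs : 0 ≤ s) :
    HasDerivAt (fun t : ℝ => 𝐑 A t) (-(𝐑 A s * 𝐑 A s)) s := by
  obtain ⟨u, hu⟩ := hA.isUnit_add_smul_one hs
  have hlin : HasDerivAt (fun t : ℝ => A + (t : ℂ) • 1) 1 s := by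
    have := ((hasDerivAt_id s).ofReal_comp.smul_const (1 : Matrix n n ℂ)).const_add A
    rwa [Complex.ofReal_one, one_smul] at this
  have := (hasFDerivAt_ringInverse (𝕜 := ℝ) u).comp_hasDerivAt_of_eq s hlin hu
  simp only [nonsing_inv_eq_ringInverse]
  refine this.congr_deriv ?_
  rw [← hu, Ring.inverse_unit]
  simp

theorem continuousOn_inv_add_smul_one (hA : A.PosDef) :
    ContinuousOn (fun s : ℝ => 𝐑 A s) (Ici 0) :=
  fun _ hs => (hA.hasDerivAt_inv_add_smul_one hs).continuousAt.continuousWithinAt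

theorem exists_norm_inv_add_smul_one_le (hA : A.PosDef) :
    ∃ K, 0 ≤ K ∧ ∀ s : ℝ, 0 ≤ s → ‖𝐑 A s‖ ≤ K * (1 + s)⁻¹ := by
  let f : ℝ → Matrix n n ℂ := fun t => (t • A + (1 - t) • 1)⁻¹
  have hf : ContinuousOn f (Icc 0 1) := by
    intro t ht
    obtain ⟨u, hu⟩ := (hA.smul_add_one_sub_smul_one ht.1 ht.2).isUnit
    simp only [f, nonsing_inv_eq_ringInverse]
    exact ((NormedRing.inverse_continuousAt u).comp_of_eq
      (f := fun t : ℝ => t • A + (1 - t) • 1) (by fun_prop) hu.symm).continuousWithinAt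
  obtain ⟨K, hK⟩ := isCompact_Icc.exists_bound_of_continuousOn hf
  refine ⟨K, (norm_nonneg _).trans (hK 0 ⟨le_rfl, zero_le_one⟩), fun s hs => ?_⟩
  have hts : (1 + s)⁻¹ * s = 1 - (1 + s)⁻¹ := by field_simp; ring
  set t := (1 + s)⁻¹
  have ht : t ∈ Icc 0 1 := ⟨by positivity, inv_le_one_of_one_le₀ (by linarith)⟩
  have hscale : t • (A + (s : ℂ) • 1) = t • A + (1 - t) • 1 := by
    rw [smul_add, Complex.coe_smul, smul_smul, hts]
  have hRs : 𝐑 A s = t • f t := by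
    refine inv_eq_left_inv ?_
    rw [smul_mul_assoc, ← mul_smul_comm, hscale]
    exact nonsing_inv_mul _ ((isUnit_iff_isUnit_det _).mp
      (hA.smul_add_one_sub_smul_one ht.1 ht.2).isUnit)
  rw [hRs, norm_smul, Real.norm_of_nonneg ht.1, mul_comm K]
  exact mul_le_mul_of_nonneg_left (hK t ht) ht.1

theorem exists_norm_inv_mul_inv_mul_le (hA : A.PosDef) (B : Matrix n n ℂ) :
    ∃ C, 0 ≤ C ∧ ∀ s : ℝ, 0 ≤ s → ‖𝐑 A s * B * 𝐑 A s * B‖ ≤ C * (1 + s)⁻¹ ^ 2 := by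
  obtain ⟨K, hK₀, hK⟩ := hA.exists_norm_inv_add_smul_one_le
  refine ⟨(K * ‖B‖) ^ 2, sq_nonneg _, fun s hs => ?_⟩
  have hRs := hK s hs
  calc ‖𝐑 A s * B * 𝐑 A s * B‖ ≤ ‖𝐑 A s‖ * ‖B‖ * ‖𝐑 A s‖ * ‖B‖ :=
        (norm_mul_le _ _).trans (mul_le_mul_of_nonneg_right norm_mul₃_le (norm_nonneg _))
    _ ≤ K * (1 + s)⁻¹ * ‖B‖ * (K * (1 + s)⁻¹) * ‖B‖ := by gcongr
    _ = (K * ‖B‖) ^ 2 * (1 + s)⁻¹ ^ 2 := by ring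

theorem integrableOn_inv_mul_inv_mul (hA : A.PosDef) (B : Matrix n n ℂ) :
    @IntegrableOn ℝ (Matrix n n ℂ) _ _ SeminormedAddGroup.toContinuousENorm
      (fun s : ℝ => 𝐑 A s * B * 𝐑 A s * B) (Ioi 0) volume := by
  obtain ⟨C, -, hC⟩ := hA.exists_norm_inv_mul_inv_mul_le B
  have hR := hA.continuousOn_inv_add_smul_one.mono Ioi_subset_Ici_self
  exact integrableOn_Ioi_of_norm_le_inv_one_add_sq
    (((hR.mul continuousOn_const).mul hR).mul continuousOn_const) (fun s hs => hC s hs.le)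

theorem integrableOn_inv_mul_inv_mul_inv (hA : A.PosDef) (B : Matrix n n ℂ) :
    @IntegrableOn ℝ (Matrix n n ℂ) _ _ SeminormedAddGroup.toContinuousENorm
      (fun s : ℝ => 𝐑 A s * B * 𝐑 A s * B * 𝐑 A s) (Ioi 0) volume := by
  obtain ⟨C, hC₀, hC⟩ := hA.exists_norm_inv_mul_inv_mul_le B
  obtain ⟨K, hK₀, hK⟩ := hA.exists_norm_inv_add_smul_one_le
  have hR := hA.continuousOn_inv_add_smul_one.mono Ioi_subset_Ici_self
  refine integrableOn_Ioi_of_norm_le_inv_one_add_sq (C := C * K)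
    ((((hR.mul continuousOn_const).mul hR).mul continuousOn_const).mul hR) (fun s hs => ?_)
  have hRBRB := hC s hs.le
  have hRs := hK s hs.le
  have ht : (1 + s)⁻¹ ≤ 1 := inv_le_one_of_one_le₀ (by linarith)
  calc _ ≤ _ := norm_mul_le _ _
    _ ≤ C * (1 + s)⁻¹ ^ 2 * (K * (1 + s)⁻¹) := by gcongr
    _ ≤ C * (1 + s)⁻¹ ^ 2 * K := by gcongr; exact mul_le_of_le_one_right hK₀ ht
    _ = C * K * (1 + s)⁻¹ ^ 2 := by ring

theorem trace_mul_inv_mul_inv_mul_inv (hA : A.PosDef) (B : Matrix n n ℂ) {s : ℝ} (hs : 0 ≤ s) :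
    (A * (𝐑 A s * B * 𝐑 A s * B * 𝐑 A s)).trace =
      (𝐑 A s * B * 𝐑 A s * B).trace - (s : ℂ) * (𝐑 A s * 𝐑 A s * B * 𝐑 A s * B).trace := by
  set R := 𝐑 A s
  have hRA : R * A = 1 - (s : ℂ) • R := by
    have := nonsing_inv_mul _ ((isUnit_iff_isUnit_det _).mp (hA.isUnit_add_smul_one hs))
    rw [Matrix.mul_add, Matrix.mul_smul, Matrix.mul_one] at this
    rw [← this, add_sub_cancel_right]
  rw [trace_mul_comm, Matrix.mul_assoc _ R A, hRA, Matrix.mul_sub, Matrix.mul_one, trace_sub,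
    Matrix.mul_smul, trace_smul, smul_eq_mul, trace_mul_comm (R * B * R * B)]
  simp only [Matrix.mul_assoc]

theorem hasDerivAt_trace_inv_mul_inv_mul (hA : A.PosDef) (B : Matrix n n ℂ) {s : ℝ} (hs : 0 ≤ s) :
    HasDerivAt (fun t : ℝ => (𝐑 A t * B * 𝐑 A t * B).trace)
      (-2 * (𝐑 A s * 𝐑 A s * B * 𝐑 A s * B).trace) s := by
  have h := hA.hasDerivAt_inv_add_smul_one hs
  have htrace : ∀ M : Matrix n n ℂ,
      LinearMap.toContinuousLinearMap (traceLinearMap n ℝ ℂ) M = M.trace := fun _ => rfl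
  refine ((LinearMap.toContinuousLinearMap (traceLinearMap n ℝ ℂ)).hasFDerivAt.comp_hasDerivAt s
    (((h.mul_const B).mul h).mul_const B)).congr_deriv ((htrace _).trans ?_)
  set R := 𝐑 A s
  have hcycle : (R * B * (R * R) * B).trace = (R * R * B * R * B).trace := by
    rw [show R * B * (R * R) * B = (R * B) * (R * R * B) by simp only [Matrix.mul_assoc],
      trace_mul_comm]
    simp only [Matrix.mul_assoc]
  simp only [neg_mul, mul_neg, add_mul, trace_add, trace_neg, hcycle]
  ring

theorem tendsto_mul_trace_inv_mul_inv_mul_atTop (hA : A.PosDef) (B : Matrix n n ℂ) :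
    Tendsto (fun s : ℝ => (s : ℂ) * (𝐑 A s * B * 𝐑 A s * B).trace) atTop (𝓝 0) := by
  obtain ⟨C, hC₀, hC⟩ := hA.exists_norm_inv_mul_inv_mul_le B
  have hinv : Tendsto (fun s : ℝ => C * (1 + s)⁻¹) atTop (𝓝 0) := by
    simpa using
      (tendsto_inv_atTop_zero.comp (tendsto_atTop_add_const_left _ 1 tendsto_id)).const_mul C
  have hsmul : Tendsto (fun s : ℝ => (s : ℂ) • (𝐑 A s * B * 𝐑 A s * B)) atTop (𝓝 0) := by
    refine squeeze_zero_norm' ?_ hinv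
    filter_upwards [eventually_ge_atTop 0] with s hs
    rw [norm_smul, Complex.norm_real, Real.norm_of_nonneg hs]
    calc _ ≤ s * (C * (1 + s)⁻¹ ^ 2) := by gcongr; exact hC s hs
      _ = C * (1 + s)⁻¹ * (s * (1 + s)⁻¹) := by ring
      _ ≤ C * (1 + s)⁻¹ * 1 := by
          gcongr
          rw [← div_eq_mul_inv, div_le_one (by linarith)]
          linarith
      _ = C * (1 + s)⁻¹ := mul_one _
  have htrace := ((continuous_id.matrix_trace).tendsto 0).comp hsmul
  simpa only [Function.comp_def, id, trace_zero, trace_smul, smul_eq_mul] using htrace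

theorem integral_trace_mul_inv_mul_inv_mul_inv (hA : A.PosDef) (B : Matrix n n ℂ) :
    ∫ s in Ioi (0 : ℝ), (A * (𝐑 A s * B * 𝐑 A s * B * 𝐑 A s)).trace =
      1 / 2 * ∫ s in Ioi (0 : ℝ), (𝐑 A s * B * 𝐑 A s * B).trace := by
  set g := fun s : ℝ => (𝐑 A s * B * 𝐑 A s * B).trace
  set T := fun s : ℝ => (A * (𝐑 A s * B * 𝐑 A s * B * 𝐑 A s)).trace
  have hg : IntegrableOn g (Ioi 0) := by
    have := integrable_trace_mul 1 (hA.integrableOn_inv_mul_inv_mul B)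
    simp only [Matrix.one_mul] at this
    exact this
  have hT : IntegrableOn T (Ioi 0) :=
    integrable_trace_mul A (hA.integrableOn_inv_mul_inv_mul_inv B)
  have hderiv : ∀ s ∈ Ici (0 : ℝ), HasDerivAt (fun s : ℝ => (s : ℂ) * g s) (2 * T s - g s) s := by
    intro s hs
    refine ((hasDerivAt_id s).ofReal_comp.mul
      (hA.hasDerivAt_trace_inv_mul_inv_mul B hs)).congr_deriv ?_
    simp only [T, g, hA.trace_mul_inv_mul_inv_mul_inv B hs]
    simp only [Complex.ofReal_one, Complex.coe_smul, one_mul, id_eq, neg_mul, mul_neg]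
    ring
  have hFTC := integral_Ioi_of_hasDerivAt_of_tendsto' hderiv
    ((hT.const_mul 2).sub hg) (hA.tendsto_mul_trace_inv_mul_inv_mul_atTop B)
  rw [integral_sub (hT.const_mul 2) hg, integral_const_mul] at hFTC
  simp only [Complex.ofReal_zero, zero_mul, sub_self] at hFTC
  linear_combination hFTC / 2

end PosDef

end

end Matrix

/-- For a positive definite `A` and arbitrary `B`,
`Tr(A · ∫₀^∞ (A+sI)⁻¹ B (A+sI)⁻¹ B (A+sI)⁻¹ ds) = (1/2)·Tr(∫₀^∞ (A+sI)⁻¹ B (A+sI)⁻¹ B ds)`,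
both improper matrix-valued integrals converging. -/
theorem stmt_14 {n : ℕ} (A B : Matrix (Fin n) (Fin n) ℂ) (hA : A.PosDef) :
    @IntegrableOn ℝ (Matrix (Fin n) (Fin n) ℂ) _ _ SeminormedAddGroup.toContinuousENorm
        (fun s : ℝ =>
          (A + (s : ℂ) • 1)⁻¹ * B * (A + (s : ℂ) • 1)⁻¹ * B * (A + (s : ℂ) • 1)⁻¹)
        (Set.Ioi 0) volume ∧
    @IntegrableOn ℝ (Matrix (Fin n) (Fin n) ℂ) _ _ SeminormedAddGroup.toContinuousENorm
        (fun s : ℝ => (A + (s : ℂ) • 1)⁻¹ * B * (A + (s : ℂ) • 1)⁻¹ * B)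
        (Set.Ioi 0) volume ∧
    (A * ∫ s in Set.Ioi (0 : ℝ),
          (A + (s : ℂ) • 1)⁻¹ * B * (A + (s : ℂ) • 1)⁻¹ * B * (A + (s : ℂ) • 1)⁻¹).trace =
      (1 / 2 : ℂ) *
        (∫ s in Set.Ioi (0 : ℝ),
            (A + (s : ℂ) • 1)⁻¹ * B * (A + (s : ℂ) • 1)⁻¹ * B).trace := by
  have h₃ := hA.integrableOn_inv_mul_inv_mul_inv B
  have h₂ := hA.integrableOn_inv_mul_inv_mul B
  refine ⟨h₃, h₂, ?_⟩
  have htrace := trace_mul_integral 1 h₂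
  simp only [Matrix.one_mul] at htrace
  rw [trace_mul_integral A h₃, htrace, hA.integral_trace_mul_inv_mul_inv_mul_inv B]
end

section
/- Let A and B be positive definite n×n complex matrices such that A+B is also positive definite. Then ln(A+B) − ln(A) = ∫₀^∞ ((A+uI)⁻¹ − (A+B+uI)⁻¹) du, where ln denotes the matrix logarithm (functional calculus on positive definite matrices) and the improper matrix-valued integral converges. -/
open MeasureTheory Matrix
open scoped ComplexOrder

attribute [local instance] Matrix.frobeniusNormedAddCommGroup Matrix.frobeniusNormedSpace

/-- The matrix logarithm of a Hermitian matrix, via the spectral theorem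
(junk value `0` for non-Hermitian input). -/
noncomputable def matLog {n : Type*} [Fintype n] [DecidableEq n] (A : Matrix n n ℂ) :
    Matrix n n ℂ :=
  if hA : A.IsHermitian then
    (hA.eigenvectorUnitary : Matrix n n ℂ) *
      Matrix.diagonal (fun i => (Real.log (hA.eigenvalues i) : ℂ)) *
        star (hA.eigenvectorUnitary : Matrix n n ℂ)
  else 0

/-!
Diagonalising `M = U diag(λ) U*`, every function of `M` is `U diag(f ∘ λ) U*`, and integrals
commute with the linear map `v ↦ U diag(v) U*`. Hence `∫₀^∞ ((M + u)⁻¹ - (1 + u)⁻¹) du` is the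
function of `M` given by the scalar integral `∫₀^∞ ((λ + u)⁻¹ - (1 + u)⁻¹) du = -log λ`, that is,
`-log M`. Subtracting these identities for `A + B` and `A` gives the theorem; the normalising term
`(1 + u)⁻¹` is needed because a single resolvent is not integrable at infinity, and it cancels.
-/

open Filter Set Real Topology

theorem tendsto_log_add_sub_log_add (a b : ℝ) :
    Tendsto (fun u : ℝ => log (a + u) - log (b + u)) atTop (𝓝 0) := by
  simpa [add_comm] using (tendsto_log_comp_add_sub_log a).sub (tendsto_log_comp_add_sub_log b)

theorem hasDerivAt_log_add_sub_log_add {a b x : ℝ} (ha : 0 < a + x) (hb : 0 < b + x) :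
    HasDerivAt (fun u : ℝ => log (a + u) - log (b + u)) ((a + x)⁻¹ - (b + x)⁻¹) x := by
  have hlog {c : ℝ} (hc : 0 < c + x) : HasDerivAt (fun u : ℝ => log (c + u)) (c + x)⁻¹ x := by
    simpa using ((hasDerivAt_id x).const_add c).log hc.ne'
  exact (hlog ha).sub (hlog hb)

theorem integrableOn_Ioi_inv_add_sub_inv_add {a b : ℝ} (ha : 0 < a) (hb : 0 < b) :
    IntegrableOn (fun u : ℝ => (a + u)⁻¹ - (b + u)⁻¹) (Ioi 0) := by
  wlog hab : a ≤ b generalizing a b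
  · simpa only [Pi.neg_def, neg_sub] using (this hb ha (le_of_not_ge hab)).neg
  refine integrableOn_Ioi_deriv_of_nonneg'
    (fun x hx => hasDerivAt_log_add_sub_log_add (by linarith [hx.out]) (by linarith [hx.out]))
    (fun x hx => ?_) (tendsto_log_add_sub_log_add a b)
  have : 0 < a + x := by linarith [hx.out]
  have : (b + x)⁻¹ ≤ (a + x)⁻¹ := by gcongr
  linarith

theorem integral_Ioi_inv_add_sub_inv_add {a b : ℝ} (ha : 0 < a) (hb : 0 < b) :
    ∫ u in Ioi (0 : ℝ), ((a + u)⁻¹ - (b + u)⁻¹) = log b - log a := by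
  rw [integral_Ioi_of_hasDerivAt_of_tendsto'
    (fun x hx => hasDerivAt_log_add_sub_log_add (by linarith [hx.out]) (by linarith [hx.out]))
    (integrableOn_Ioi_inv_add_sub_inv_add ha hb) (tendsto_log_add_sub_log_add a b)]
  simp

namespace Matrix

variable {ι : Type*} [Fintype ι] [DecidableEq ι] {M : Matrix ι ι ℂ}

theorem IsHermitian.matLog_eq_cfc (hM : M.IsHermitian) : matLog M = cfc log M := by
  rw [matLog, dif_pos hM, hM.cfc_eq, IsHermitian.cfc, Unitary.conjStarAlgAut_apply]
  rfl

/- `Matrix` carries the product topology, which the functional calculus uses; integrability for the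
Frobenius norm needs the norm topology, so it is named explicitly. -/
theorem IsHermitian.integrableOn_cfc_and_setIntegral_cfc (hM : M.IsHermitian) {X : Type*}
    [MeasurableSpace X] {μ : Measure X} {s : Set X} (f : X → ℝ → ℝ)
    (hf : ∀ i, IntegrableOn (fun x => f x (hM.eigenvalues i)) s μ) :
    @IntegrableOn X (Matrix ι ι ℂ) _
        NormedAddCommGroup.toMetricSpace.toUniformSpace.toTopologicalSpace _
        (fun x => cfc (f x) M) s μ ∧
      ∫ x in s, cfc (f x) M ∂μ = cfc (fun r => ∫ x in s, f x r ∂μ) M := by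
  let L : (ι → ℝ) →ₗ[ℝ] Matrix ι ι ℂ :=
    { toFun v := Unitary.conjStarAlgAut ℂ _ hM.eigenvectorUnitary (diagonal (RCLike.ofReal ∘ v))
      map_add' v w := by
        rw [← map_add, diagonal_add]
        congr 2
        ext
        simp
      map_smul' c v := by
        rw [RingHom.id_apply, ← Complex.coe_smul, ← map_smul, ← diagonal_smul]
        congr 2
        ext
        simp }
  have hL (g : ℝ → ℝ) : cfc g M = L.toContinuousLinearMap (fun i => g (hM.eigenvalues i)) :=
    hM.cfc_eq g
  have hv : IntegrableOn (fun x i => f x (hM.eigenvalues i)) s μ := Integrable.of_eval hf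
  simp_rw [hL]
  refine ⟨L.toContinuousLinearMap.integrable_comp hv, ?_⟩
  exact (L.toContinuousLinearMap.integral_comp_comm hv).trans
    (congrArg _ (funext fun i => eval_integral hf i))

theorem PosDef.pos_of_mem_spectrum (hM : M.PosDef) {x : ℝ} (hx : x ∈ spectrum ℝ M) : 0 < x := by
  obtain ⟨i, rfl⟩ := hM.isHermitian.spectrum_real_eq_range_eigenvalues ▸ hx
  exact hM.eigenvalues_pos i

theorem PosDef.inv_add_smul_one_eq_cfc (hM : M.PosDef) {u : ℝ} (hu : 0 ≤ u) :
    (M + (u : ℂ) • 1)⁻¹ = cfc (fun x : ℝ => (x + u)⁻¹) M := by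
  have hspec (x) (hx : x ∈ spectrum ℝ M) : x + u ≠ 0 :=
    (add_pos_of_pos_of_nonneg (hM.pos_of_mem_spectrum hx) hu).ne'
  symm
  calc cfc (fun x : ℝ => (x + u)⁻¹) M = Ring.inverse (cfc (fun x : ℝ => x + u) M) :=
        cfc_inv _ M hspec (M.finite_real_spectrum.continuousOn _) hM.isHermitian
    _ = Ring.inverse (M + algebraMap ℝ _ u) := by
      congr 1
      exact (cfc_add_const u (fun x => x) M continuousOn_id hM.isHermitian).trans
        (congrArg (· + _) (cfc_id' ℝ M hM.isHermitian))
    _ = (M + (u : ℂ) • 1)⁻¹ := by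
      rw [nonsing_inv_eq_ringInverse, Algebra.algebraMap_eq_smul_one]
      simp

theorem PosDef.integral_inv_add_smul_one_sub_eq_neg_matLog (hM : M.PosDef) :
    @IntegrableOn ℝ (Matrix ι ι ℂ) _
        NormedAddCommGroup.toMetricSpace.toUniformSpace.toTopologicalSpace _
        (fun u : ℝ => (M + (u : ℂ) • 1)⁻¹ - ((1 + u)⁻¹ : ℝ) • 1) (Ioi 0) volume ∧
      ∫ u in Ioi (0 : ℝ), ((M + (u : ℂ) • 1)⁻¹ - ((1 + u)⁻¹ : ℝ) • 1) = -matLog M := by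
  set g : ℝ → ℝ → ℝ := fun u x => (x + u)⁻¹ - (1 + u)⁻¹
  have hg : EqOn (fun u : ℝ => (M + (u : ℂ) • 1)⁻¹ - ((1 + u)⁻¹ : ℝ) • 1)
      (fun u => cfc (g u) M) (Ioi 0) := by
    intro u hu
    dsimp only
    rw [hM.inv_add_smul_one_eq_cfc hu.out.le, ← Algebra.algebraMap_eq_smul_one,
      ← cfc_const (1 + u)⁻¹ M hM.isHermitian]
    exact (cfc_sub _ _ M (M.finite_real_spectrum.continuousOn _) continuousOn_const).symm
  obtain ⟨hint, hintegral⟩ := hM.isHermitian.integrableOn_cfc_and_setIntegral_cfc g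
    (fun i => integrableOn_Ioi_inv_add_sub_inv_add (hM.eigenvalues_pos i) one_pos)
  refine ⟨hint.congr_fun hg.symm measurableSet_Ioi, ?_⟩
  rw [setIntegral_congr_fun measurableSet_Ioi hg, hintegral, hM.isHermitian.matLog_eq_cfc,
    ← cfc_neg]
  refine cfc_congr fun x hx => ?_
  simp only [g, integral_Ioi_inv_add_sub_inv_add (hM.pos_of_mem_spectrum hx) one_pos, log_one,
    zero_sub]

end Matrix

theorem stmt_15_general {n : ℕ} (A B : Matrix (Fin n) (Fin n) ℂ) (hA : A.PosDef)
    (hAB : (A + B).PosDef) :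
    @IntegrableOn ℝ (Matrix (Fin n) (Fin n) ℂ) _
        (NormedAddCommGroup.toMetricSpace.toUniformSpace.toTopologicalSpace) _
        (fun u : ℝ => (A + (u : ℂ) • 1)⁻¹ - (A + B + (u : ℂ) • 1)⁻¹) (Set.Ioi 0) volume ∧
      matLog (A + B) - matLog A =
        ∫ u in Set.Ioi (0 : ℝ), ((A + (u : ℂ) • 1)⁻¹ - (A + B + (u : ℂ) • 1)⁻¹) := by
  obtain ⟨hintA, hlogA⟩ := hA.integral_inv_add_smul_one_sub_eq_neg_matLog
  obtain ⟨hintAB, hlogAB⟩ := hAB.integral_inv_add_smul_one_sub_eq_neg_matLog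
  have hsplit : (fun u : ℝ => (A + (u : ℂ) • 1)⁻¹ - (A + B + (u : ℂ) • 1)⁻¹) =
      fun u : ℝ => ((A + (u : ℂ) • 1)⁻¹ - ((1 + u)⁻¹ : ℝ) • 1) -
        ((A + B + (u : ℂ) • 1)⁻¹ - ((1 + u)⁻¹ : ℝ) • 1) :=
    funext fun u => (sub_sub_sub_cancel_right _ _ _).symm
  rw [hsplit, integral_sub hintA hintAB, hlogA, hlogAB]
  exact ⟨hintA.sub hintAB, by abel⟩

/-- For positive definite `A`, `B` with `A+B` positive definite,
`ln(A+B) − ln A = ∫₀^∞ ((A+uI)⁻¹ − (A+B+uI)⁻¹) du`, the improper matrix-valued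
integral converging. -/
theorem stmt_15 {n : ℕ} (A B : Matrix (Fin n) (Fin n) ℂ) (hA : A.PosDef) (hB : B.PosDef)
    (hAB : (A + B).PosDef) :
    @IntegrableOn ℝ (Matrix (Fin n) (Fin n) ℂ) _
        (NormedAddCommGroup.toMetricSpace.toUniformSpace.toTopologicalSpace) _
        (fun u : ℝ => (A + (u : ℂ) • 1)⁻¹ - (A + B + (u : ℂ) • 1)⁻¹) (Set.Ioi 0) volume ∧
      matLog (A + B) - matLog A =
        ∫ u in Set.Ioi (0 : ℝ), ((A + (u : ℂ) • 1)⁻¹ - (A + B + (u : ℂ) • 1)⁻¹) :=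
  stmt_15_general A B hA hAB
end
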